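/- (Σ_n^P-Overspill) Let n ∈ ℕ, let M be a model of KP^P + Π_n^P-Foundation, let S be a rank-cut of M, let m ∈ M, and let σ(x,y) be a Σ_n^P formula. If for every ordinal ξ of S there is an ordinal ζ of S with ξ <^M ζ and M ⊨ σ(ζ, m), then for every ordinal ν of M not in S there is an ordinal μ of M not in S with μ <^M ν and M ⊨ σ(μ, m). -/
import Mathlib


namespace SetTh

/-- First-order formulas of the language of set theory, with `n` free variables
(de Bruijn indices). -/
inductive Fml : ℕ → Type where
  | mem {n : ℕ} (i j : Fin n) : Fml n
  | eq {n : ℕ} (i j : Fin n) : Fml n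
  | not {n : ℕ} (φ : Fml n) : Fml n
  | and {n : ℕ} (φ ψ : Fml n) : Fml n
  | all {n : ℕ} (φ : Fml (n + 1)) : Fml n

namespace Fml

def or {n : ℕ} (φ ψ : Fml n) : Fml n := Fml.not (Fml.and (Fml.not φ) (Fml.not ψ))

def imp {n : ℕ} (φ ψ : Fml n) : Fml n := Fml.or (Fml.not φ) ψ

def ex {n : ℕ} (φ : Fml (n + 1)) : Fml n := Fml.not (Fml.all (Fml.not φ))

/-- The formula `xᵢ ⊆ xⱼ`. -/
def subeq {n : ℕ} (i j : Fin n) : Fml n :=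
  Fml.all (Fml.imp (Fml.mem (0 : Fin (n + 1)) i.succ) (Fml.mem (0 : Fin (n + 1)) j.succ))

end Fml

/-- Renaming of variables. -/
def rename : (m n : ℕ) → (Fin m → Fin n) → Fml m → Fml n
  | _, _, f, Fml.mem i j => Fml.mem (f i) (f j)
  | _, _, f, Fml.eq i j => Fml.eq (f i) (f j)
  | m, n, f, Fml.not φ => Fml.not (rename m n f φ)
  | m, n, f, Fml.and φ ψ => Fml.and (rename m n f φ) (rename m n f ψ)
  | m, n, f, Fml.all φ =>
      Fml.all (rename (m + 1) (n + 1)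
        (fun k => Fin.cases (0 : Fin (n + 1)) (fun i => (f i).succ) k) φ)

/-- Tarskian satisfaction for a structure `(M, E)`. -/
def Realize {M : Type*} (E : M → M → Prop) : (n : ℕ) → Fml n → (Fin n → M) → Prop
  | _, Fml.mem i j, v => E (v i) (v j)
  | _, Fml.eq i j, v => v i = v j
  | n, Fml.not φ, v => ¬ Realize E n φ v
  | n, Fml.and φ ψ, v => Realize E n φ v ∧ Realize E n ψ v
  | n, Fml.all φ, v => ∀ x : M, Realize E (n + 1) φ (Fin.cons x v)

/-- Δ₀ formulas: all quantifiers are bounded by ∈. -/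
inductive IsDelta0 : (n : ℕ) → Fml n → Prop where
  | mem {n : ℕ} (i j : Fin n) : IsDelta0 n (Fml.mem i j)
  | eq {n : ℕ} (i j : Fin n) : IsDelta0 n (Fml.eq i j)
  | not {n : ℕ} {φ : Fml n} : IsDelta0 n φ → IsDelta0 n (Fml.not φ)
  | and {n : ℕ} {φ ψ : Fml n} : IsDelta0 n φ → IsDelta0 n ψ → IsDelta0 n (Fml.and φ ψ)
  | allMem {n : ℕ} (j : Fin n) {φ : Fml (n + 1)} :
      IsDelta0 (n + 1) φ →
      IsDelta0 n (Fml.all (Fml.imp (Fml.mem (0 : Fin (n + 1)) j.succ) φ))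

/-- Δ₀^P formulas (Takahashi): quantifiers bounded by ∈ or by ⊆. -/
inductive IsDelta0P : (n : ℕ) → Fml n → Prop where
  | mem {n : ℕ} (i j : Fin n) : IsDelta0P n (Fml.mem i j)
  | eq {n : ℕ} (i j : Fin n) : IsDelta0P n (Fml.eq i j)
  | not {n : ℕ} {φ : Fml n} : IsDelta0P n φ → IsDelta0P n (Fml.not φ)
  | and {n : ℕ} {φ ψ : Fml n} : IsDelta0P n φ → IsDelta0P n ψ → IsDelta0P n (Fml.and φ ψ)
  | allMem {n : ℕ} (j : Fin n) {φ : Fml (n + 1)} :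
      IsDelta0P (n + 1) φ →
      IsDelta0P n (Fml.all (Fml.imp (Fml.mem (0 : Fin (n + 1)) j.succ) φ))
  | allSub {n : ℕ} (j : Fin n) {φ : Fml (n + 1)} :
      IsDelta0P (n + 1) φ →
      IsDelta0P n (Fml.all (Fml.imp (Fml.subeq (0 : Fin (n + 1)) j.succ) φ))

/-- Levels of the Σ/Π hierarchy over a base class. `true` = Σ, `false` = Π. -/
def IsLvl (base : (n : ℕ) → Fml n → Prop) : Bool → ℕ → (n : ℕ) → Fml n → Prop
  | _, 0, n, φ => base n φ
  | true, k + 1, n, φ => ∃ ψ : Fml (n + 1), φ = Fml.ex ψ ∧ IsLvl base false k (n + 1) ψ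
  | false, k + 1, n, φ => ∃ ψ : Fml (n + 1), φ = Fml.all ψ ∧ IsLvl base true k (n + 1) ψ

def IsSigma (k n : ℕ) (φ : Fml n) : Prop := IsLvl IsDelta0 true k n φ
def IsPi (k n : ℕ) (φ : Fml n) : Prop := IsLvl IsDelta0 false k n φ
def IsSigmaP (k n : ℕ) (φ : Fml n) : Prop := IsLvl IsDelta0P true k n φ
def IsPiP (k n : ℕ) (φ : Fml n) : Prop := IsLvl IsDelta0P false k n φ

/-- B_k^P : closure of Σ_k^P (and Δ₀^P) under Boolean connectives and bounded quantifiers. -/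
inductive IsBP (k : ℕ) : (n : ℕ) → Fml n → Prop where
  | ofSigma {n : ℕ} {φ : Fml n} : IsSigmaP k n φ → IsBP k n φ
  | ofDelta0 {n : ℕ} {φ : Fml n} : IsDelta0P n φ → IsBP k n φ
  | not {n : ℕ} {φ : Fml n} : IsBP k n φ → IsBP k n (Fml.not φ)
  | and {n : ℕ} {φ ψ : Fml n} : IsBP k n φ → IsBP k n ψ → IsBP k n (Fml.and φ ψ)
  | allMem {n : ℕ} (j : Fin n) {φ : Fml (n + 1)} :
      IsBP k (n + 1) φ → IsBP k n (Fml.all (Fml.imp (Fml.mem (0 : Fin (n + 1)) j.succ) φ))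
  | allSub {n : ℕ} (j : Fin n) {φ : Fml (n + 1)} :
      IsBP k (n + 1) φ → IsBP k n (Fml.all (Fml.imp (Fml.subeq (0 : Fin (n + 1)) j.succ) φ))

section Axioms

variable {M : Type*}

def Extensionality (E : M → M → Prop) : Prop :=
  ∀ x y : M, (∀ u, E u x ↔ E u y) → x = y

def PairAx (E : M → M → Prop) : Prop :=
  ∀ u v : M, ∃ x, ∀ w, E w x ↔ (w = u ∨ w = v)

def UnionAx (E : M → M → Prop) : Prop :=
  ∀ x : M, ∃ u, ∀ r, E r u ↔ ∃ v, E v x ∧ E r v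

def PowerAx (E : M → M → Prop) : Prop :=
  ∀ u : M, ∃ x, ∀ v, (E v x ↔ ∀ r, E r v → E r u)

def InfinityAx (E : M → M → Prop) : Prop :=
  ∃ x, (∃ e, E e x ∧ ∀ z, ¬ E z e) ∧ ∀ u, E u x → ∃ s, E s x ∧ ∀ w, (E w s ↔ w = u)

/-- Separation schema for a class `Γ` of formulas. -/
def SepScheme (E : M → M → Prop) (Γ : (n : ℕ) → Fml n → Prop) : Prop :=
  ∀ (n : ℕ) (φ : Fml (n + 1)), Γ (n + 1) φ → ∀ (v : Fin n → M) (a : M),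
    ∃ b, ∀ u, E u b ↔ (E u a ∧ Realize E (n + 1) φ (Fin.cons u v))

/-- Collection schema for a class `Γ` of formulas (variable 0 = u, variable 1 = w). -/
def CollScheme (E : M → M → Prop) (Γ : (n : ℕ) → Fml n → Prop) : Prop :=
  ∀ (n : ℕ) (φ : Fml (n + 2)), Γ (n + 2) φ → ∀ (v : Fin n → M) (x : M),
    (∀ u, E u x → ∃ w, Realize E (n + 2) φ (Fin.cons u (Fin.cons w v))) →
    ∃ y, ∀ u, E u x → ∃ w, E w y ∧ Realize E (n + 2) φ (Fin.cons u (Fin.cons w v))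

/-- Foundation schema for a class `Γ` of formulas. -/
def FndScheme (E : M → M → Prop) (Γ : (n : ℕ) → Fml n → Prop) : Prop :=
  ∀ (n : ℕ) (φ : Fml (n + 1)), Γ (n + 1) φ → ∀ (v : Fin n → M),
    (∃ a, Realize E (n + 1) φ (Fin.cons a v)) →
    ∃ a, Realize E (n + 1) φ (Fin.cons a v) ∧
      ∀ u, E u a → ¬ Realize E (n + 1) φ (Fin.cons u v)

/-- Kripke–Platek set theory. -/
def KP (E : M → M → Prop) : Prop :=
  Extensionality E ∧ PairAx E ∧ UnionAx E ∧ InfinityAx E ∧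
  SepScheme E IsDelta0 ∧ CollScheme E IsDelta0 ∧ FndScheme E (IsPi 1)

/-- Power Kripke–Platek set theory KP^P. -/
def KPP (E : M → M → Prop) : Prop :=
  Extensionality E ∧ PairAx E ∧ UnionAx E ∧ PowerAx E ∧ InfinityAx E ∧
  SepScheme E IsDelta0P ∧ CollScheme E IsDelta0P ∧ FndScheme E (IsPiP 1)

def IsTrans (E : M → M → Prop) (a : M) : Prop := ∀ x, E x a → ∀ y, E y x → E y a

/-- `a` is an ordinal of `(M, E)`: transitive, with transitive members,
linearly ordered by `E`. -/
def IsOrd (E : M → M → Prop) (a : M) : Prop :=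
  IsTrans E a ∧ (∀ x, E x a → IsTrans E x) ∧
  (∀ x, E x a → ∀ y, E y a → x = y ∨ E x y ∨ E y x)

def OrdLE (E : M → M → Prop) (a b : M) : Prop := a = b ∨ E a b

/-- `rk` is the (unique, definable) rank function of `(M, E)`:
`rk x` is the least ordinal containing `rk y` for every `y ∈ x`. -/
def IsRankFn (E : M → M → Prop) (rk : M → M) : Prop :=
  (∀ x, IsOrd E (rk x)) ∧
  (∀ x y, E y x → E (rk y) (rk x)) ∧
  (∀ x α, IsOrd E α → (∀ y, E y x → E (rk y) α) → OrdLE E (rk x) α)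

/-- `V` is the cumulative hierarchy function of `(M, E)` relative to the rank
function `rk`: for an ordinal `α`, `V α` consists of the sets of rank `< α`. -/
def IsVFn (E : M → M → Prop) (rk V : M → M) : Prop :=
  ∀ α, IsOrd E α → ∀ x, (E x (V α) ↔ E (rk x) α)

/-- `p` is the internal Kuratowski ordered pair `⟨a, b⟩`. -/
def IsOPair (E : M → M → Prop) (p a b : M) : Prop :=
  ∀ z, E z p ↔ ((∀ w, E w z ↔ w = a) ∨ (∀ w, E w z ↔ (w = a ∨ w = b)))

/-- `y` is a value of the internal function `f` at `x`. -/
def AppR (E : M → M → Prop) (f x y : M) : Prop := ∃ p, E p f ∧ IsOPair E p x y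

/-- `f` is an internal function from `a` to `b`. -/
def IsIntFunc (E : M → M → Prop) (f a b : M) : Prop :=
  (∀ p, E p f → ∃ x y, E x a ∧ E y b ∧ IsOPair E p x y) ∧
  (∀ x, E x a → ∃! y, AppR E f x y)

def IsLimitOrd (E : M → M → Prop) (a : M) : Prop :=
  IsOrd E a ∧ (∃ z, E z a) ∧ ∀ z, E z a → ∃ z', E z z' ∧ E z' a

/-- `w` is the internal ω of `(M, E)`: the least limit ordinal. -/
def IsOmega (E : M → M → Prop) (w : M) : Prop :=
  IsLimitOrd E w ∧ ∀ z, E z w → ¬ IsLimitOrd E z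

end Axioms

section Embeddings

variable {M N : Type*}

def IsEmbedding (E : M → M → Prop) (E' : N → N → Prop) (i : M → N) : Prop :=
  Function.Injective i ∧ ∀ a b : M, E a b ↔ E' (i a) (i b)

def IsInitialEmb (E' : N → N → Prop) (i : M → N) : Prop :=
  ∀ (m : M) (x : N), E' x (i m) → x ∈ Set.range i

def IsPInitialEmb (E' : N → N → Prop) (i : M → N) : Prop :=
  IsInitialEmb E' i ∧ ∀ (m : M) (x : N), (∀ z, E' z x → E' z (i m)) → x ∈ Set.range i

def IsRankInitialEmb (E' : N → N → Prop) (rk' : N → N) (i : M → N) : Prop :=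
  ∀ (m : M) (x : N), OrdLE E' (rk' x) (rk' (i m)) → x ∈ Set.range i

def IsBoundedEmb (E : M → M → Prop) (E' : N → N → Prop) (i : M → N) : Prop :=
  ∃ β, IsOrd E' β ∧ ∀ a : M, IsOrd E a → E' (i a) β

def IsToplessEmb (E : M → M → Prop) (E' : N → N → Prop) (i : M → N) : Prop :=
  IsBoundedEmb E E' i ∧
  ∀ β, IsOrd E' β → β ∉ Set.range i → ∃ β', IsOrd E' β' ∧ β' ∉ Set.range i ∧ E' β' β

end Embeddings

/-- Semantic equivalence over all models of KP^P (= provable equivalence, by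
completeness). -/
def EquivOverKPP (n : ℕ) (φ ψ : Fml n) : Prop :=
  ∀ (M : Type) (E : M → M → Prop), KPP E → ∀ v : Fin n → M,
    (Realize E n φ v ↔ Realize E n ψ v)

/-- `φ` is Σ₁^P up to provable equivalence over KP^P. -/
def Sigma1PUpto (n : ℕ) (φ : Fml n) : Prop :=
  ∃ ψ : Fml n, IsSigmaP 1 n ψ ∧ EquivOverKPP n φ ψ


-- ### auxiliary development

-- ### helper lemmas

section RealizeLemmas
variable {M : Type*} (E : M → M → Prop)

@[simp] lemma realize_mem {n} (i j : Fin n) (v : Fin n → M) :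
    Realize E n (Fml.mem i j) v ↔ E (v i) (v j) := Iff.rfl

@[simp] lemma realize_eq {n} (i j : Fin n) (v : Fin n → M) :
    Realize E n (Fml.eq i j) v ↔ v i = v j := Iff.rfl

@[simp] lemma realize_not {n} (φ : Fml n) (v : Fin n → M) :
    Realize E n (Fml.not φ) v ↔ ¬ Realize E n φ v := Iff.rfl

@[simp] lemma realize_and {n} (φ ψ : Fml n) (v : Fin n → M) :
    Realize E n (Fml.and φ ψ) v ↔ Realize E n φ v ∧ Realize E n ψ v := Iff.rfl

@[simp] lemma realize_all {n} (φ : Fml (n + 1)) (v : Fin n → M) :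
    Realize E n (Fml.all φ) v ↔ ∀ x : M, Realize E (n + 1) φ (Fin.cons x v) := Iff.rfl

@[simp] lemma realize_or {n} (φ ψ : Fml n) (v : Fin n → M) :
    Realize E n (Fml.or φ ψ) v ↔ Realize E n φ v ∨ Realize E n ψ v := by
  simp only [Fml.or, realize_not, realize_and]; tauto

@[simp] lemma realize_imp {n} (φ ψ : Fml n) (v : Fin n → M) :
    Realize E n (Fml.imp φ ψ) v ↔ (Realize E n φ v → Realize E n ψ v) := by
  simp only [Fml.imp, realize_or, realize_not]; tauto

@[simp] lemma realize_ex {n} (φ : Fml (n + 1)) (v : Fin n → M) :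
    Realize E n (Fml.ex φ) v ↔ ∃ x : M, Realize E (n + 1) φ (Fin.cons x v) := by
  simp only [Fml.ex, realize_not, realize_all]
  push_neg; rfl

lemma realize_rename {m n : ℕ} (f : Fin m → Fin n) (φ : Fml m) :
    ∀ (v : Fin n → M), Realize E n (rename m n f φ) v ↔ Realize E m φ (v ∘ f) := by
  induction φ generalizing n with
  | mem i j => intro v; rfl
  | eq i j => intro v; rfl
  | not φ ih => intro v; simp [rename, ih]
  | and φ ψ ih1 ih2 => intro v; simp [rename, ih1, ih2]
  | all φ ih =>
      intro v
      simp only [rename, realize_all, ih]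
      apply forall_congr'; intro x
      have : (Fin.cons x v) ∘ (fun k => Fin.cases (0 : Fin (n+1)) (fun i => (f i).succ) k)
          = Fin.cons x (v ∘ f) := by
        funext i
        refine Fin.cases ?_ (fun j => ?_) i <;> simp
      rw [this]

end RealizeLemmas

lemma IsDelta0P.or {n} {φ ψ : Fml n} (h1 : IsDelta0P n φ) (h2 : IsDelta0P n ψ) :
    IsDelta0P n (Fml.or φ ψ) := .not (.and (.not h1) (.not h2))

lemma IsDelta0P.imp {n} {φ ψ : Fml n} (h1 : IsDelta0P n φ) (h2 : IsDelta0P n ψ) :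
    IsDelta0P n (Fml.imp φ ψ) := .or (.not h1) h2

lemma rename_subeq {m n : ℕ} (f : Fin m → Fin n) (i j : Fin m) :
    rename m n f (Fml.subeq i j) = Fml.subeq (f i) (f j) := by
  simp only [Fml.subeq, Fml.imp, Fml.or, rename, Fin.cases_zero, Fin.cases_succ]

lemma IsDelta0P.rename {m : ℕ} {φ : Fml m} (h : IsDelta0P m φ) :
    ∀ {n : ℕ} (f : Fin m → Fin n), IsDelta0P n (SetTh.rename m n f φ) := by
  induction h with
  | mem i j => intro n f; exact .mem _ _
  | eq i j => intro n f; exact .eq _ _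
  | not _ ih => intro n f; exact .not (ih f)
  | and _ _ ih1 ih2 => intro n f; exact .and (ih1 f) (ih2 f)
  | @allMem k j φ _ ih =>
      intro n f
      have : SetTh.rename k n f (Fml.all (Fml.imp (Fml.mem 0 j.succ) φ))
          = Fml.all (Fml.imp (Fml.mem 0 (f j).succ)
              (SetTh.rename (k+1) (n+1)
                (fun t => Fin.cases (0 : Fin (n+1)) (fun i => (f i).succ) t) φ)) := by
        simp only [SetTh.rename, Fml.imp, Fml.or, Fin.cases_zero, Fin.cases_succ]
      rw [this]
      exact .allMem (f j) (ih _)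
  | @allSub k j φ _ ih =>
      intro n f
      have : SetTh.rename k n f (Fml.all (Fml.imp (Fml.subeq 0 j.succ) φ))
          = Fml.all (Fml.imp (Fml.subeq 0 (f j).succ)
              (SetTh.rename (k+1) (n+1)
                (fun t => Fin.cases (0 : Fin (n+1)) (fun i => (f i).succ) t) φ)) := by
        simp only [SetTh.rename, Fml.imp, Fml.or, Fml.subeq, Fin.cases_zero, Fin.cases_succ]
      rw [this]
      exact .allSub (f j) (ih _)



section Toolkit
variable {M : Type*} {E : M → M → Prop}

lemma cons_mk_zero (x : M) {n : ℕ} (v : Fin n → M) (h : 0 < n + 1) :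
    (Fin.cons x v : Fin (n + 1) → M) ⟨0, h⟩ = x := rfl

lemma cons_mk_succ (x : M) {n : ℕ} (v : Fin n → M) (k : ℕ) (h : k + 1 < n + 1) :
    (Fin.cons x v : Fin (n + 1) → M) ⟨k + 1, h⟩ = v ⟨k, Nat.lt_of_succ_lt_succ h⟩ := by
  have e : (⟨k + 1, h⟩ : Fin (n + 1)) = Fin.succ ⟨k, Nat.lt_of_succ_lt_succ h⟩ := rfl
  rw [e, Fin.cons_succ]

/-- Append: `w` on the low indices, `t` on the high ones. -/
def appV {b c : ℕ} (w : Fin b → M) (t : Fin c → M) : Fin (b + c) → M :=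
  fun i => if h : (i : ℕ) < b then w ⟨i, h⟩ else t ⟨(i : ℕ) - b, by omega⟩

lemma appV_lt {b c : ℕ} (w : Fin b → M) (t : Fin c → M) {k : ℕ} (h : k < b)
    (hk : k < b + c) : appV w t ⟨k, hk⟩ = w ⟨k, h⟩ := by simp [appV, h]

lemma appV_ge {b c : ℕ} (w : Fin b → M) (t : Fin c → M) {k : ℕ} (h : b ≤ k)
    (hk : k < b + c) : appV w t ⟨k, hk⟩ = t ⟨k - b, by omega⟩ := by
  simp [appV, Nat.not_lt_of_le h]

lemma appV_zero {c : ℕ} (w : Fin 0 → M) (t : Fin c → M) (i : Fin (0 + c)) :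
    appV w t i = t ⟨(i : ℕ), by omega⟩ := by
  simp [appV]

lemma appV_cons {b : ℕ} (x : M) (w : Fin b → M) (t : Fin 4 → M) :
    appV (Fin.cons x w) t = Fin.cons x (appV w t) := by
  funext i
  rcases i with ⟨iv, hiv⟩
  cases iv with
  | zero =>
      rw [appV_lt _ _ (by omega : 0 < b + 1), cons_mk_zero, cons_mk_zero]
  | succ k =>
      rw [cons_mk_succ]
      by_cases h : k < b
      · rw [appV_lt _ _ (by omega : k + 1 < b + 1), cons_mk_succ, appV_lt _ _ h]
      · rw [appV_ge _ _ (by omega : b + 1 ≤ k + 1), appV_ge _ _ (by omega : b ≤ k)]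
        congr 1
        apply Fin.ext
        simp

/-- Foundation for Δ₀^P formulas, from Π₁^P foundation. -/
lemma fnd_delta0 (hne : Nonempty M) (hfnd : FndScheme E (IsPiP 1)) :
    FndScheme E IsDelta0P := by
  intro n φ hφ v hex
  have hpi : IsPiP 1 (n + 1) (Fml.all (rename (n + 1) (n + 2) Fin.succ φ)) :=
    ⟨rename (n + 1) (n + 2) Fin.succ φ, rfl, hφ.rename _⟩
  have heq : ∀ w : Fin (n + 1) → M,
      Realize E (n + 1) (Fml.all (rename (n + 1) (n + 2) Fin.succ φ)) w ↔
        Realize E (n + 1) φ w := by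
    intro w
    obtain ⟨x0⟩ := hne
    simp only [realize_all, realize_rename]
    have hc : ∀ x : M, (Fin.cons x w) ∘ (Fin.succ : Fin (n+1) → Fin (n+2)) = w :=
      fun x => funext fun i => Fin.cons_succ _ _ _
    constructor
    · intro h; have := h x0; rwa [hc] at this
    · intro h x; rw [hc]; exact h
  obtain ⟨a, ha, hmin⟩ := hfnd n _ hpi v (by obtain ⟨a, ha⟩ := hex; exact ⟨a, (heq _).2 ha⟩)
  exact ⟨a, (heq _).1 ha, fun u hu hru => hmin u hu ((heq _).2 hru)⟩

lemma not_mem_self (hfd : FndScheme E IsDelta0P) (x : M) : ¬ E x x := by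
  intro hx
  have hd0 : IsDelta0P 2 (Fml.and (Fml.mem 0 (0 : Fin 1).succ)
      (Fml.mem (0 : Fin 1).succ 0)) := .and (.mem _ _) (.mem _ _)
  obtain ⟨a, ha, hmin⟩ := hfd 1 _ hd0 (Fin.cons x Fin.elim0)
    ⟨x, by simp only [realize_and, realize_mem, Fin.cons_zero, Fin.cons_succ]; exact ⟨hx, hx⟩⟩
  simp only [realize_and, realize_mem, Fin.cons_zero, Fin.cons_succ] at ha hmin
  exact hmin x ha.2 ⟨hx, hx⟩

lemma ord_subset_mem (hfd : FndScheme E IsDelta0P) (hext : Extensionality E)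
    {α β : M} (hα : IsOrd E α) (hβ : IsOrd E β)
    (hsub : ∀ x, E x α → E x β) (hne : α ≠ β) : E α β := by
  have hd0 : IsDelta0P 3 (Fml.and (Fml.mem 0 (0 : Fin 2).succ)
      (Fml.not (Fml.mem 0 ((0 : Fin 1).succ : Fin 2).succ))) :=
    .and (.mem _ _) (.not (.mem _ _))
  have hexists : ∃ u, E u β ∧ ¬ E u α := by
    by_contra hcon
    push_neg at hcon
    exact hne (hext α β (fun u => ⟨fun h => hsub u h, fun h => hcon u h⟩))
  obtain ⟨ξ, hξ, hmin⟩ := hfd 2 _ hd0 (Fin.cons β (Fin.cons α Fin.elim0))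
    (by obtain ⟨u, h1, h2⟩ := hexists
        refine ⟨u, ?_⟩
        simp only [realize_and, realize_not, realize_mem, Fin.cons_zero, Fin.cons_succ]
        exact ⟨h1, h2⟩)
  simp only [realize_and, realize_not, realize_mem, Fin.cons_zero, Fin.cons_succ] at hξ hmin
  obtain ⟨hξβ, hξα⟩ := hξ
  have : α = ξ := by
    apply hext
    intro w
    constructor
    · intro hwα
      have hwβ := hsub w hwα
      rcases hβ.2.2 ξ hξβ w hwβ with h | h | h
      · exact absurd (h ▸ hwα) hξα
      · exact absurd (hα.1 w hwα ξ h) hξα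
      · exact h
    · intro hwξ
      have hwβ : E w β := hβ.1 ξ hξβ w hwξ
      by_contra hwα
      exact hmin w hwξ ⟨hwβ, hwα⟩
  exact this ▸ hξβ

lemma inter_ord (hsep : SepScheme E IsDelta0P) {α β : M}
    (hα : IsOrd E α) (hβ : IsOrd E β) :
    ∃ γ, IsOrd E γ ∧ (∀ u, E u γ ↔ E u α ∧ E u β) := by
  obtain ⟨γ, hγ⟩ := hsep 1 (Fml.mem 0 (0 : Fin 1).succ) (.mem _ _)
    (Fin.cons β Fin.elim0) α
  simp only [realize_mem, Fin.cons_zero, Fin.cons_succ] at hγ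
  refine ⟨γ, ⟨?_, ?_, ?_⟩, hγ⟩
  · intro x hx y hy
    obtain ⟨hxα, hxβ⟩ := (hγ x).1 hx
    exact (hγ y).2 ⟨hα.1 x hxα y hy, hβ.1 x hxβ y hy⟩
  · intro x hx
    exact hα.2.1 x ((hγ x).1 hx).1
  · intro x hx y hy
    exact hα.2.2 x ((hγ x).1 hx).1 y ((hγ y).1 hy).1

lemma ord_trichotomy (hfd : FndScheme E IsDelta0P) (hext : Extensionality E)
    (hsep : SepScheme E IsDelta0P) {α β : M}
    (hα : IsOrd E α) (hβ : IsOrd E β) : α = β ∨ E α β ∨ E β α := by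
  obtain ⟨γ, hγord, hγ⟩ := inter_ord hsep hα hβ
  have hγα : ∀ u, E u γ → E u α := fun u h => ((hγ u).1 h).1
  have hγβ : ∀ u, E u γ → E u β := fun u h => ((hγ u).1 h).2
  by_cases h1 : γ = α
  · by_cases h2 : γ = β
    · exact Or.inl (h1.symm.trans h2)
    · exact Or.inr (Or.inl (h1 ▸ ord_subset_mem hfd hext hγord hβ hγβ h2))
  · have hEγα : E γ α := ord_subset_mem hfd hext hγord hα hγα h1
    by_cases h2 : γ = β
    · exact Or.inr (Or.inr (h2 ▸ hEγα))
    · have hEγβ : E γ β := ord_subset_mem hfd hext hγord hβ hγβ h2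
      exact absurd ((hγ γ).2 ⟨hEγα, hEγβ⟩) (not_mem_self hfd γ)
end Toolkit



section OrdPair
variable {M : Type*} {E : M → M → Prop}

/-- Bounded existential. -/
def Fml.exMem {n : ℕ} (j : Fin n) (φ : Fml (n + 1)) : Fml n :=
  Fml.not (Fml.all (Fml.imp (Fml.mem (0 : Fin (n + 1)) j.succ) (Fml.not φ)))

lemma IsDelta0P.exMem {n : ℕ} (j : Fin n) {φ : Fml (n + 1)} (h : IsDelta0P (n + 1) φ) :
    IsDelta0P n (Fml.exMem j φ) := .not (.allMem j (.not h))

@[simp] lemma realize_exMem {n : ℕ} (j : Fin n) (φ : Fml (n + 1)) (v : Fin n → M) :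
    Realize E n (Fml.exMem j φ) v ↔
      ∃ x, E x (v j) ∧ Realize E (n + 1) φ (Fin.cons x v) := by
  simp only [Fml.exMem, realize_not, realize_all, realize_imp, realize_mem,
    Fin.cons_zero, Fin.cons_succ]
  push_neg <;> tauto

@[simp] lemma realize_allMem {n : ℕ} (j : Fin n) (φ : Fml (n + 1)) (v : Fin n → M) :
    Realize E n (Fml.all (Fml.imp (Fml.mem (0 : Fin (n + 1)) j.succ) φ)) v ↔
      ∀ x, E x (v j) → Realize E (n + 1) φ (Fin.cons x v) := by
  simp only [realize_all, realize_imp, realize_mem, Fin.cons_zero, Fin.cons_succ]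

/-- `IsOrd` as a Δ₀ formula with one free variable. -/
def ordFml : Fml 1 :=
  Fml.and
    (Fml.all (Fml.imp (Fml.mem 0 (0 : Fin 1).succ)
      (Fml.all (Fml.imp (Fml.mem 0 (0 : Fin 2).succ)
        (Fml.mem 0 ((0 : Fin 1).succ : Fin 2).succ)))))
    (Fml.and
      (Fml.all (Fml.imp (Fml.mem 0 (0 : Fin 1).succ)
        (Fml.all (Fml.imp (Fml.mem 0 (0 : Fin 2).succ)
          (Fml.all (Fml.imp (Fml.mem 0 (0 : Fin 3).succ)
            (Fml.mem 0 (((0 : Fin 2).succ : Fin 3).succ))))))))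
      (Fml.all (Fml.imp (Fml.mem 0 (0 : Fin 1).succ)
        (Fml.all (Fml.imp (Fml.mem 0 ((0 : Fin 1).succ : Fin 2).succ)
          (Fml.or (Fml.eq ((0 : Fin 2).succ : Fin 3) 0)
            (Fml.or (Fml.mem ((0 : Fin 2).succ : Fin 3) 0)
              (Fml.mem 0 ((0 : Fin 2).succ : Fin 3)))))))))

lemma ordFml_delta0 : IsDelta0P 1 ordFml :=
  .and (.allMem (0 : Fin 1) (.allMem (0 : Fin 2) (.mem _ _)))
    (.and
      (.allMem (0 : Fin 1) (.allMem (0 : Fin 2) (.allMem (0 : Fin 3) (.mem _ _))))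
      (.allMem (0 : Fin 1) (.allMem ((0 : Fin 1).succ : Fin 2)
        (.or (.eq _ _) (.or (.mem _ _) (.mem _ _))))))

lemma realize_ordFml (v : Fin 1 → M) :
    Realize E 1 ordFml v ↔ IsOrd E (v 0) := by
  simp only [ordFml, realize_and, realize_allMem, realize_or, realize_eq, realize_mem,
    Fin.cons_zero, Fin.cons_succ, IsOrd, IsTrans] <;> tauto

/-- `z = {a}` with `z = var 0`, `a = var 1`, bounded version. -/
def singFml : Fml 2 :=
  Fml.and
    (Fml.all (Fml.imp (Fml.mem 0 (0 : Fin 2).succ)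
      (Fml.eq 0 (((0 : Fin 1).succ : Fin 2).succ))))
    (Fml.mem (0 : Fin 1).succ 0)

lemma singFml_delta0 : IsDelta0P 2 singFml :=
  .and (.allMem (0 : Fin 2) (.eq _ _)) (.mem _ _)

lemma realize_singFml (hext : Extensionality E) (v : Fin 2 → M) :
    Realize E 2 singFml v ↔ ∀ w, E w (v 0) ↔ w = v 1 := by
  simp only [singFml, realize_and, realize_allMem, realize_eq, realize_mem,
    Fin.cons_zero, Fin.cons_succ]
  constructor
  · rintro ⟨h1, h2⟩ w
    exact ⟨fun hw => h1 w hw, fun hw => hw ▸ h2⟩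
  · intro h
    exact ⟨fun w hw => (h w).1 hw, (h (v 1)).2 rfl⟩

/-- `z = {a, b}` with `z = var 0`, `a = var 1`, `b = var 2`, bounded version. -/
def prFml : Fml 3 :=
  Fml.and
    (Fml.all (Fml.imp (Fml.mem 0 (0 : Fin 3).succ)
      (Fml.or (Fml.eq 0 (((0 : Fin 2).succ : Fin 3).succ))
        (Fml.eq 0 ((((0 : Fin 1).succ : Fin 2).succ : Fin 3).succ)))))
    (Fml.and (Fml.mem ((0 : Fin 2).succ : Fin 3) 0)
      (Fml.mem (((0 : Fin 1).succ : Fin 2).succ : Fin 3) 0))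

lemma prFml_delta0 : IsDelta0P 3 prFml :=
  .and (.allMem (0 : Fin 3) (.or (.eq _ _) (.eq _ _))) (.and (.mem _ _) (.mem _ _))

lemma realize_prFml (v : Fin 3 → M) :
    Realize E 3 prFml v ↔ ∀ w, E w (v 0) ↔ (w = v 1 ∨ w = v 2) := by
  simp only [prFml, realize_and, realize_allMem, realize_or, realize_eq, realize_mem,
    Fin.cons_zero, Fin.cons_succ]
  constructor
  · rintro ⟨h1, h2, h3⟩ w
    refine ⟨fun hw => h1 w hw, fun hw => ?_⟩
    rcases hw with h | h
    · exact h ▸ h2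
    · exact h ▸ h3
  · intro h
    exact ⟨fun w hw => (h w).1 hw, (h (v 1)).2 (Or.inl rfl), (h (v 2)).2 (Or.inr rfl)⟩

/-- `IsOPair p a b` as a Δ₀ formula, `p = var 0`, `a = var 1`, `b = var 2`. -/
def opairFml : Fml 3 :=
  Fml.and
    (Fml.all (Fml.imp (Fml.mem 0 (0 : Fin 3).succ)
      (Fml.or
        (rename 2 4 (fun i => if i = 0 then 0 else ⟨2, by omega⟩) singFml)
        (rename 3 4 (fun i => if i = 0 then 0 else if i = 1 then ⟨2, by omega⟩
          else ⟨3, by omega⟩) prFml))))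
    (Fml.and
      (Fml.exMem (0 : Fin 3)
        (rename 2 4 (fun i => if i = 0 then 0 else ⟨2, by omega⟩) singFml))
      (Fml.exMem (0 : Fin 3)
        (rename 3 4 (fun i => if i = 0 then 0 else if i = 1 then ⟨2, by omega⟩
          else ⟨3, by omega⟩) prFml)))

lemma opairFml_delta0 : IsDelta0P 3 opairFml :=
  .and (.allMem _ (.or (singFml_delta0.rename _) (prFml_delta0.rename _)))
    (.and (.exMem _ (singFml_delta0.rename _)) (.exMem _ (prFml_delta0.rename _)))

lemma realize_opairFml (hext : Extensionality E) (hpair : PairAx E) (v : Fin 3 → M) :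
    Realize E 3 opairFml v ↔ IsOPair E (v 0) (v 1) (v 2) := by
  have hs : ∀ z : M,
      Realize E 4 (rename 2 4 (fun i => if i = 0 then 0 else ⟨2, by omega⟩) singFml)
        (Fin.cons z v) ↔ ∀ u, E u z ↔ u = v 1 := by
    intro z
    rw [realize_rename, realize_singFml hext]
    exact Iff.rfl
  have hp : ∀ z : M,
      Realize E 4 (rename 3 4 (fun i => if i = 0 then 0 else if i = 1 then ⟨2, by omega⟩
        else ⟨3, by omega⟩) prFml) (Fin.cons z v) ↔
      ∀ u, E u z ↔ (u = v 1 ∨ u = v 2) := by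
    intro z
    rw [realize_rename, realize_prFml]
    exact Iff.rfl
  simp only [opairFml, realize_and, realize_allMem, realize_exMem, realize_or, hs, hp]
  constructor
  · rintro ⟨h1, ⟨st, hstp, hst⟩, ⟨t, htp, ht⟩⟩ z
    constructor
    · intro hz
      exact h1 z hz
    · rintro (h | h)
      · exact (hext z st fun u => (h u).trans (hst u).symm) ▸ hstp
      · exact (hext z t fun u => (h u).trans (ht u).symm) ▸ htp
  · intro h
    refine ⟨fun z hz => (h z).1 hz, ?_, ?_⟩
    · obtain ⟨st, hst⟩ := hpair (v 1) (v 1)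
      have hst' : ∀ u, E u st ↔ u = v 1 := fun u => (hst u).trans or_self_iff
      exact ⟨st, (h st).2 (Or.inl hst'), hst'⟩
    · obtain ⟨t, ht⟩ := hpair (v 1) (v 2)
      exact ⟨t, (h t).2 (Or.inr ht), ht⟩

lemma opair_exists (hext : Extensionality E) (hpair : PairAx E) (a b : M) :
    ∃ p, IsOPair E p a b := by
  obtain ⟨st, hst⟩ := hpair a a
  have hs' : ∀ u, E u st ↔ u = a := fun u => (hst u).trans or_self_iff
  obtain ⟨t, ht⟩ := hpair a b
  obtain ⟨p, hp⟩ := hpair st t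
  refine ⟨p, fun z => ⟨fun hz => ?_, fun hz => ?_⟩⟩
  · rcases (hp z).1 hz with h | h
    · exact Or.inl (h ▸ hs')
    · exact Or.inr (h ▸ ht)
  · rcases hz with h | h
    · exact (hp z).2 (Or.inl (hext z st fun u => (h u).trans (hs' u).symm))
    · exact (hp z).2 (Or.inr (hext z t fun u => (h u).trans (ht u).symm))

lemma opair_unique (hpair : PairAx E) {p a b c d : M}
    (h1 : IsOPair E p a b) (h2 : IsOPair E p c d) : a = c ∧ b = d := by
  obtain ⟨st, hst⟩ := hpair a a
  have hs' : ∀ u, E u st ↔ u = a := fun u => (hst u).trans or_self_iff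
  have hstp : E st p := (h1 st).2 (Or.inl hs')
  obtain ⟨t, ht⟩ := hpair a b
  have htp : E t p := (h1 t).2 (Or.inr ht)
  have hac : a = c := by
    rcases (h2 st).1 hstp with h | h
    · exact (h a).1 ((hs' a).2 rfl)
    · exact ((hs' c).1 ((h c).2 (Or.inl rfl))).symm
  have hbacd : b = c ∨ b = d := by
    rcases (h2 t).1 htp with h | h
    · exact Or.inl ((h b).1 ((ht b).2 (Or.inr rfl)))
    · exact (h b).1 ((ht b).2 (Or.inr rfl))
  obtain ⟨t', ht'⟩ := hpair c d
  have ht'p : E t' p := (h2 t').2 (Or.inr ht')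
  have hdab : d = a ∨ d = b := by
    rcases (h1 t').1 ht'p with h | h
    · exact Or.inl ((h d).1 ((ht' d).2 (Or.inr rfl)))
    · exact (h d).1 ((ht' d).2 (Or.inr rfl))
  refine ⟨hac, ?_⟩
  rcases hbacd with hb | hb
  · rcases hdab with hd | hd
    · exact hb.trans (hac.symm.trans hd.symm)
    · exact hd.symm
  · exact hb

end OrdPair


section Surgery
variable {M : Type*} {E : M → M → Prop}

@[simp] lemma cons_mk0 {n : ℕ} (x : M) (v : Fin n → M) (h : 0 < n + 1) :
    (Fin.cons x v : Fin (n + 1) → M) ⟨0, h⟩ = x := rfl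

@[simp] lemma cons_cons_mk1 {n : ℕ} (x y : M) (v : Fin n → M) (h : 1 < n + 2) :
    (Fin.cons x (Fin.cons y v) : Fin (n + 2) → M) ⟨1, h⟩ = y := rfl

@[simp] lemma appV4_base {b : ℕ} (w : Fin b → M) (t : Fin 4 → M) (h : b < b + 4) :
    appV w t ⟨b, h⟩ = t ⟨0, by omega⟩ := by
  rw [appV_ge _ _ (le_refl b)]
  congr 1
  exact Fin.ext (by simp)

@[simp] lemma appV4_base1 {b : ℕ} (w : Fin b → M) (t : Fin 4 → M) (h : b + 1 < b + 4) :
    appV w t ⟨b + 1, h⟩ = t ⟨1, by omega⟩ := by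
  rw [appV_ge _ _ (by omega : b ≤ b + 1)]
  congr 1
  exact Fin.ext (by simp)

@[simp] lemma appV4_base2 {b : ℕ} (w : Fin b → M) (t : Fin 4 → M) (h : b + 1 + 1 < b + 4) :
    appV w t ⟨b + 1 + 1, h⟩ = t ⟨2, by omega⟩ := by
  rw [appV_ge _ _ (by omega : b ≤ b + 1 + 1)]
  congr 1
  exact Fin.ext (by simp; omega)

@[simp] lemma eval3_y {b : ℕ} (x₁ ζ p : M) (w : Fin b → M) (t : Fin 4 → M)
    (h : b + 1 + 1 + 1 < b + 4 + 1 + 1 + 1) :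
    (Fin.cons x₁ (Fin.cons ζ (Fin.cons p (appV w t))) : Fin (b + 4 + 1 + 1 + 1) → M)
      ⟨b + 1 + 1 + 1, h⟩ = t ⟨0, by omega⟩ := by
  rw [cons_mk_succ, cons_mk_succ, cons_mk_succ, appV4_base]

@[simp] lemma eval3_beta {b : ℕ} (x₁ ζ p : M) (w : Fin b → M) (t : Fin 4 → M)
    (h : b + 1 + 1 + 1 + 1 < b + 4 + 1 + 1 + 1) :
    (Fin.cons x₁ (Fin.cons ζ (Fin.cons p (appV w t))) : Fin (b + 4 + 1 + 1 + 1) → M)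
      ⟨b + 1 + 1 + 1 + 1, h⟩ = t ⟨1, by omega⟩ := by
  rw [cons_mk_succ, cons_mk_succ, cons_mk_succ, appV4_base1]

@[simp] lemma eval3_nu {b : ℕ} (x₁ ζ p : M) (w : Fin b → M) (t : Fin 4 → M)
    (h : b + 1 + 1 + 1 + 1 + 1 < b + 4 + 1 + 1 + 1) :
    (Fin.cons x₁ (Fin.cons ζ (Fin.cons p (appV w t))) : Fin (b + 4 + 1 + 1 + 1) → M)
      ⟨b + 1 + 1 + 1 + 1 + 1, h⟩ = t ⟨2, by omega⟩ := by
  rw [cons_mk_succ, cons_mk_succ, cons_mk_succ, appV4_base2]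

/-- The variable placement for the ordered-pair formula inside the kernel. -/
def gOp (b : ℕ) : Fin 3 → Fin (b + 4 + 1 + 1 + 1) := fun i =>
  if i = 0 then ⟨b + 1 + 1 + 1, by omega⟩ else if i = 1 then ⟨1, by omega⟩
  else ⟨0, by omega⟩

/-- The variable renaming for the matrix of `σ` inside the kernel. -/
def fker (b : ℕ) : Fin (b + 3) → Fin (b + 4 + 1 + 1 + 1) := fun i =>
  if h : (i : ℕ) < b then ⟨(i : ℕ) + 1 + 1 + 1, by omega⟩
  else if (i : ℕ) = b then ⟨0, by omega⟩
  else if (i : ℕ) = b + 1 then ⟨1, by omega⟩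
  else ⟨b + 1 + 1 + 1 + 1 + 1 + 1, by omega⟩

lemma comp_fker {b : ℕ} (x₁ ζ p : M) (w : Fin b → M) (t : Fin 4 → M) :
    (Fin.cons x₁ (Fin.cons ζ (Fin.cons p (appV w t))) : Fin (b + 4 + 1 + 1 + 1) → M)
        ∘ (fker b)
      = appV w (Fin.cons x₁ (Fin.cons ζ (Fin.cons (t ⟨3, by omega⟩) Fin.elim0))) := by
  funext i
  rcases i with ⟨iv, hiv⟩
  simp only [Function.comp_apply, fker]
  by_cases h1 : iv < b
  · rw [dif_pos h1, cons_mk_succ, cons_mk_succ, cons_mk_succ,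
      appV_lt _ _ h1, appV_lt _ _ h1]
  · rw [dif_neg h1]
    by_cases h2 : iv = b
    · rw [if_pos h2, appV_ge _ _ (by omega : b ≤ iv)]
      have : (⟨iv - b, by omega⟩ : Fin 3) = ⟨0, by omega⟩ := Fin.ext (by simp; omega)
      rw [this]
      rfl
    · by_cases h3 : iv = b + 1
      · rw [if_neg h2, if_pos h3, appV_ge _ _ (by omega : b ≤ iv)]
        have : (⟨iv - b, by omega⟩ : Fin 3) = ⟨1, by omega⟩ := Fin.ext (by simp; omega)
        rw [this]
        rfl
      · have h4 : iv = b + 2 := by omega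
        rw [if_neg h2, if_neg h3, cons_mk_succ, cons_mk_succ, cons_mk_succ,
          appV_ge _ _ (by omega : b ≤ b + 1 + 1 + 1), appV_ge _ _ (by omega : b ≤ iv)]
        have e1 : (⟨b + 1 + 1 + 1 - b, by omega⟩ : Fin 4) = ⟨3, by omega⟩ :=
          Fin.ext (by simp; omega)
        have e2 : (⟨iv - b, by omega⟩ : Fin 3) = ⟨2, by omega⟩ := Fin.ext (by simp; omega)
        rw [e1, e2]
        rfl

/-- The Δ₀^P kernel: `β ∈ ν ∧ Ord β ∧ ∀ p ∈ y₁, ∀ ζ ∈ p, ∀ x₁ ∈ p,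
(y₁ = ⟨ζ,x₁⟩ → β ∈ ζ → ζ ∈ ν → Ord ζ → ¬φ(x₁,ζ,m))`, in context
`(wvars, y₁, β, ν, m)`. -/
def kernelFml (b : ℕ) (φ : Fml (b + 3)) : Fml (b + 4) :=
  Fml.and
    (Fml.and (Fml.mem ⟨b + 1, by omega⟩ ⟨b + 1 + 1, by omega⟩)
      (rename 1 (b + 4) (fun _ => ⟨b + 1, by omega⟩) ordFml))
    (Fml.all (Fml.imp (Fml.mem 0 (⟨b, by omega⟩ : Fin (b + 4)).succ)
      (Fml.all (Fml.imp (Fml.mem 0 ((0 : Fin (b + 4 + 1))).succ)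
        (Fml.all (Fml.imp (Fml.mem 0 ((⟨1, by omega⟩ : Fin (b + 4 + 1 + 1))).succ)
          (Fml.imp (rename 3 (b + 4 + 1 + 1 + 1) (gOp b) opairFml)
            (Fml.imp (Fml.mem ⟨b + 1 + 1 + 1 + 1, by omega⟩ ⟨1, by omega⟩)
              (Fml.imp (Fml.mem ⟨1, by omega⟩ ⟨b + 1 + 1 + 1 + 1 + 1, by omega⟩)
                (Fml.imp (rename 1 (b + 4 + 1 + 1 + 1) (fun _ => ⟨1, by omega⟩) ordFml)
                  (Fml.not (rename (b + 3) (b + 4 + 1 + 1 + 1) (fker b) φ))))))))))))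

lemma kernelFml_delta0 {b : ℕ} {φ : Fml (b + 3)} (hφ : IsDelta0P (b + 3) φ) :
    IsDelta0P (b + 4) (kernelFml b φ) :=
  .and (.and (.mem _ _) (ordFml_delta0.rename _))
    (.allMem _ (.allMem _ (.allMem _
      (.imp (opairFml_delta0.rename _)
        (.imp (.mem _ _) (.imp (.mem _ _)
          (.imp (ordFml_delta0.rename _) (.not (hφ.rename _)))))))))

lemma realize_kernel (hext : Extensionality E) (hpair : PairAx E)
    {b : ℕ} (φ : Fml (b + 3)) (w : Fin b → M) (t : Fin 4 → M) :
    Realize E (b + 4) (kernelFml b φ) (appV w t) ↔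
      (E (t ⟨1, by omega⟩) (t ⟨2, by omega⟩) ∧ IsOrd E (t ⟨1, by omega⟩) ∧
       ∀ ζ x₁, IsOPair E (t ⟨0, by omega⟩) ζ x₁ → E (t ⟨1, by omega⟩) ζ →
         E ζ (t ⟨2, by omega⟩) → IsOrd E ζ →
         ¬ Realize E (b + 3) φ
           (appV w (Fin.cons x₁ (Fin.cons ζ (Fin.cons (t ⟨3, by omega⟩) Fin.elim0))))) := by
  simp only [kernelFml, realize_and, realize_allMem, realize_imp, realize_not,
    realize_mem, realize_rename, realize_ordFml, realize_opairFml hext hpair,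
    comp_fker, Function.comp_apply, gOp, Fin.cons_zero,
    appV4_base, appV4_base1, appV4_base2, eval3_y, eval3_beta, eval3_nu,
    cons_mk0, cons_cons_mk1]
  simp only [show ((0 : Fin 3) = 0) = True by simp, if_true,
    show ((1 : Fin 3) = 0) = False by simp, show ((2 : Fin 3) = 0) = False by simp,
    show ((1 : Fin 3) = 1) = True by simp, show ((2 : Fin 3) = 1) = False by simp,
    if_false, cons_mk0, cons_cons_mk1, eval3_y]
  constructor
  · rintro ⟨⟨h1, h2⟩, h3⟩
    refine ⟨h1, h2, fun ζ x₁ hop hβζ hζν hord hφr => ?_⟩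
    obtain ⟨pp, hpp⟩ := hpair ζ x₁
    have hppy : E pp (t ⟨0, by omega⟩) := (hop pp).2 (Or.inr hpp)
    exact h3 pp hppy ζ ((hpp ζ).2 (Or.inl rfl)) x₁ ((hpp x₁).2 (Or.inr rfl))
      hop hβζ hζν hord hφr
  · rintro ⟨h1, h2, h3⟩
    exact ⟨⟨h1, h2⟩, fun p hp ζ hζ x₁ hx₁ hop hβζ hζν hord hφr =>
      h3 ζ x₁ hop hβζ hζν hord hφr⟩

end Surgery


section SurgeryMain
variable {M : Type*} {E : M → M → Prop}

lemma appV_cons3 {b : ℕ} (x : M) (w : Fin b → M) (t : Fin 3 → M) :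
    appV (Fin.cons x w) t = Fin.cons x (appV w t) := by
  funext i
  rcases i with ⟨iv, hiv⟩
  cases iv with
  | zero =>
      rw [appV_lt _ _ (by omega : 0 < b + 1), cons_mk_zero, cons_mk_zero]
  | succ k =>
      rw [cons_mk_succ]
      by_cases h : k < b
      · rw [appV_lt _ _ (by omega : k + 1 < b + 1), cons_mk_succ, appV_lt _ _ h]
      · rw [appV_ge _ _ (by omega : b + 1 ≤ k + 1), appV_ge _ _ (by omega : b ≤ k)]
        congr 1
        apply Fin.ext
        simp

lemma surgery (hext : Extensionality E) (hpair : PairAx E) (hne : Nonempty M) :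
    ∀ (k : ℕ) (s : Bool) (b : ℕ) (φ : Fml (b + 3)),
      IsLvl IsDelta0P s k (b + 3) φ →
      ∃ Ψ : Fml (b + 4), IsLvl IsDelta0P (!s) k (b + 4) Ψ ∧
        ∀ (w : Fin b → M) (t : Fin 4 → M),
          Realize E (b + 4) Ψ (appV w t) ↔
            (E (t ⟨1, by omega⟩) (t ⟨2, by omega⟩) ∧ IsOrd E (t ⟨1, by omega⟩) ∧
             ∀ ζ x₁, IsOPair E (t ⟨0, by omega⟩) ζ x₁ → E (t ⟨1, by omega⟩) ζ →
               E ζ (t ⟨2, by omega⟩) → IsOrd E ζ →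
               ¬ Realize E (b + 3) φ
                 (appV w (Fin.cons x₁ (Fin.cons ζ
                   (Fin.cons (t ⟨3, by omega⟩) Fin.elim0))))) := by
  intro k
  induction k with
  | zero =>
      intro s b φ hφ
      cases s <;>
        exact ⟨kernelFml b φ, kernelFml_delta0 hφ, fun w t => realize_kernel hext hpair φ w t⟩
  | succ k ih =>
      intro s b φ hφ
      cases s with
      | true =>
          obtain ⟨ψ, rfl, hψ⟩ := hφ
          obtain ⟨Ψ', hΨ'lvl, hΨ'⟩ := ih false (b + 1) ψ hψ
          refine ⟨Fml.all Ψ', ⟨Ψ', rfl, hΨ'lvl⟩, ?_⟩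
          intro w t
          have key : ∀ x : M, Realize E (b + 1 + 4) Ψ' (Fin.cons x (appV w t)) ↔
              (E (t ⟨1, by omega⟩) (t ⟨2, by omega⟩) ∧ IsOrd E (t ⟨1, by omega⟩) ∧
               ∀ ζ x₁, IsOPair E (t ⟨0, by omega⟩) ζ x₁ → E (t ⟨1, by omega⟩) ζ →
                 E ζ (t ⟨2, by omega⟩) → IsOrd E ζ →
                 ¬ Realize E (b + 1 + 3) ψ
                   (appV (Fin.cons x w) (Fin.cons x₁ (Fin.cons ζ
                     (Fin.cons (t ⟨3, by omega⟩) Fin.elim0))))) := by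
            intro x
            rw [← appV_cons]
            exact hΨ' (Fin.cons x w) t
          rw [realize_all]
          constructor
          · intro h
            obtain ⟨x0⟩ := hne
            have h0 := (key x0).1 (h x0)
            refine ⟨h0.1, h0.2.1, fun ζ x₁ hop h1 h2 h3 => ?_⟩
            rw [realize_ex]
            rintro ⟨x, hx⟩
            exact ((key x).1 (h x)).2.2 ζ x₁ hop h1 h2 h3
              (by rw [appV_cons3]; exact hx)
          · rintro ⟨h1, h2, h3⟩ x
            refine (key x).2 ⟨h1, h2, fun ζ x₁ hop hh1 hh2 hh3 hR => ?_⟩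
            refine h3 ζ x₁ hop hh1 hh2 hh3 ?_
            rw [realize_ex]
            exact ⟨x, by rw [← appV_cons3]; exact hR⟩
      | false =>
          obtain ⟨ψ, rfl, hψ⟩ := hφ
          obtain ⟨Ψ', hΨ'lvl, hΨ'⟩ := ih true (b + 1) ψ hψ
          refine ⟨Fml.ex Ψ', ⟨Ψ', rfl, hΨ'lvl⟩, ?_⟩
          intro w t
          rw [realize_ex]
          constructor
          · rintro ⟨x, hx⟩
            rw [← appV_cons] at hx
            have h := (hΨ' (Fin.cons x w) t).1 hx
            refine ⟨h.1, h.2.1, fun ζ x₁ hop h1 h2 h3 => ?_⟩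
            intro hall
            exact h.2.2 ζ x₁ hop h1 h2 h3
              (by rw [appV_cons3]; exact hall x)
          · rintro ⟨h1, h2, h3⟩
            by_cases hD : ∃ ζ x₁, IsOPair E (t ⟨0, by omega⟩) ζ x₁ ∧
                E (t ⟨1, by omega⟩) ζ ∧ E ζ (t ⟨2, by omega⟩) ∧ IsOrd E ζ
            · obtain ⟨ζ, x₁, hop, hh1, hh2, hh3⟩ := hD
              have hnall := h3 ζ x₁ hop hh1 hh2 hh3
              have hex : ∃ x, ¬ Realize E (b + 3 + 1) ψ (Fin.cons x
                  (appV w (Fin.cons x₁ (Fin.cons ζ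
                    (Fin.cons (t ⟨3, by omega⟩) Fin.elim0))))) := by
                by_contra hcc
                push_neg at hcc
                exact hnall (fun x => hcc x)
              obtain ⟨x, hxn⟩ := hex
              refine ⟨x, ?_⟩
              rw [← appV_cons]
              refine (hΨ' (Fin.cons x w) t).2 ⟨h1, h2,
                fun ζ' x₁' hop' hh1' hh2' hh3' hR => ?_⟩
              obtain ⟨eζ, ex₁⟩ := opair_unique hpair hop' hop
              subst eζ
              subst ex₁
              exact hxn (by rw [← appV_cons3]; exact hR)
            · obtain ⟨x0⟩ := hne
              refine ⟨x0, ?_⟩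
              rw [← appV_cons]
              exact (hΨ' (Fin.cons x0 w) t).2 ⟨h1, h2,
                fun ζ x₁ hop hh1 hh2 hh3 hR =>
                  absurd ⟨ζ, x₁, hop, hh1, hh2, hh3⟩ hD⟩

end SurgeryMain


section TopFormula
variable {M : Type*} {E : M → M → Prop}

lemma appV_zero3 (t : Fin 3 → M) :
    appV (Fin.elim0 : Fin 0 → M) t = t := by
  funext i
  rw [appV_zero]

lemma appV_zero4 (t : Fin 4 → M) :
    appV (Fin.elim0 : Fin 0 → M) t = t := by
  funext i
  rw [appV_zero]

/-- The Π_nn^P formula used for foundation: context `(β, ν, m)`,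
expressing `β ∈ ν ∧ Ord β ∧ ∀ ζ (β ∈ ζ → ζ ∈ ν → Ord ζ → ¬ σ(ζ, m))`. -/
lemma overspill_formula (hext : Extensionality E) (hpair : PairAx E) (hne : Nonempty M)
    (nn : ℕ) (σ : Fml 2) (hσ : IsSigmaP nn 2 σ) :
    ∃ χ : Fml 3, IsPiP nn 3 χ ∧ ∀ β ν m : M,
      Realize E 3 χ (Fin.cons β (Fin.cons ν (Fin.cons m Fin.elim0))) ↔
        (E β ν ∧ IsOrd E β ∧ ∀ ζ, E β ζ → E ζ ν → IsOrd E ζ →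
          ¬ Realize E 2 σ (Fin.cons ζ (Fin.cons m Fin.elim0))) := by
  cases nn with
  | zero =>
      -- σ is Δ₀^P
      have hσ0 : IsDelta0P 2 σ := hσ
      refine ⟨Fml.and
        (Fml.and (Fml.mem 0 (0 : Fin 2).succ) (rename 1 3 (fun _ => 0) ordFml))
        (Fml.all (Fml.imp (Fml.mem 0 ((0 : Fin 2).succ : Fin 3).succ)
          (Fml.imp (Fml.mem (0 : Fin 3).succ 0)
            (Fml.imp (rename 1 4 (fun _ => 0) ordFml)
              (Fml.not (rename 2 4
                (fun i => if i = 0 then 0 else ⟨3, by omega⟩) σ)))))), ?_, ?_⟩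
      · exact .and (.and (.mem _ _) (ordFml_delta0.rename _))
          (.allMem _ (.imp (.mem _ _) (.imp (ordFml_delta0.rename _)
            (.not (hσ0.rename _)))))
      · intro β ν m
        have hcomp : ∀ ζ : M,
            ((Fin.cons ζ (Fin.cons β (Fin.cons ν (Fin.cons m Fin.elim0))) : Fin 4 → M) ∘
              (fun i : Fin 2 => if i = 0 then 0 else ⟨3, by omega⟩))
              = Fin.cons ζ (Fin.cons m Fin.elim0) := by
          intro ζ
          funext i
          fin_cases i <;> rfl
        simp only [realize_and, realize_allMem, realize_imp, realize_not, realize_mem,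
          realize_rename, realize_ordFml, Function.comp_apply, Fin.cons_zero,
          Fin.cons_succ, hcomp]
        constructor
        · rintro ⟨⟨h1, h2⟩, h3⟩
          exact ⟨h1, h2, fun ζ hβζ hζν hord => h3 ζ hζν hβζ hord⟩
        · rintro ⟨h1, h2, h3⟩
          exact ⟨⟨h1, h2⟩, fun ζ hζν hβζ hord => h3 ζ hβζ hζν hord⟩
  | succ k =>
      obtain ⟨ψ, rfl, hψ⟩ := hσ
      obtain ⟨Ψ, hΨlvl, hΨ⟩ := surgery hext hpair hne k false 0 ψ hψ
      refine ⟨Fml.all Ψ, ⟨Ψ, rfl, hΨlvl⟩, ?_⟩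
      intro β ν m
      rw [realize_all]
      have key : ∀ y₁ : M,
          Realize E (0 + 4) Ψ
            (Fin.cons y₁ (Fin.cons β (Fin.cons ν (Fin.cons m Fin.elim0)))) ↔
          (E β ν ∧ IsOrd E β ∧ ∀ ζ x₁, IsOPair E y₁ ζ x₁ → E β ζ → E ζ ν → IsOrd E ζ →
            ¬ Realize E (0 + 3) ψ
              (Fin.cons x₁ (Fin.cons ζ (Fin.cons m Fin.elim0)))) := by
        intro y₁
        have e1 : (Fin.cons y₁ (Fin.cons β (Fin.cons ν (Fin.cons m Fin.elim0)))
            : Fin 4 → M) = appV (Fin.elim0 : Fin 0 → M)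
              (Fin.cons y₁ (Fin.cons β (Fin.cons ν (Fin.cons m Fin.elim0)))) :=
          (appV_zero4 _).symm
        rw [e1, hΨ Fin.elim0 _]
        have et : ∀ j : Fin 4, ∀ hj : (j : ℕ) < 4,
            (Fin.cons y₁ (Fin.cons β (Fin.cons ν (Fin.cons m Fin.elim0))) : Fin 4 → M)
              ⟨(j : ℕ), hj⟩ =
            (Fin.cons y₁ (Fin.cons β (Fin.cons ν (Fin.cons m Fin.elim0))) : Fin 4 → M) j :=
          fun j hj => congrArg _ (Fin.ext rfl)
        constructor
        · rintro ⟨h1, h2, h3⟩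
          refine ⟨h1, h2, fun ζ x₁ hop hβζ hζν hord hR => ?_⟩
          exact h3 ζ x₁ hop hβζ hζν hord (by
            rw [appV_zero3]
            exact hR)
        · rintro ⟨h1, h2, h3⟩
          refine ⟨h1, h2, fun ζ x₁ hop hβζ hζν hord hR => ?_⟩
          refine h3 ζ x₁ hop hβζ hζν hord ?_
          rw [appV_zero3] at hR
          exact hR
      constructor
      · intro h
        obtain ⟨y₀⟩ := hne
        have h0 := (key y₀).1 (h y₀)
        refine ⟨h0.1, h0.2.1, fun ζ hβζ hζν hord => ?_⟩
        rw [realize_ex]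
        rintro ⟨x₁, hx₁⟩
        obtain ⟨y₁, hy₁⟩ := opair_exists hext hpair ζ x₁
        exact ((key y₁).1 (h y₁)).2.2 ζ x₁ hy₁ hβζ hζν hord hx₁
      · rintro ⟨h1, h2, h3⟩ y₁
        refine (key y₁).2 ⟨h1, h2, fun ζ x₁ hop hβζ hζν hord hR => ?_⟩
        refine h3 ζ hβζ hζν hord ?_
        rw [realize_ex]
        exact ⟨x₁, hR⟩

end TopFormula

end SetTh

open SetTh in
/-- **Σ_n^P-Overspill.** Let `M ⊨ KP^P + Π_n^P-Foundation`, let `S` be a rank-cut of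
`M`, `m ∈ M`, and `σ(x,y)` a Σ_n^P formula. If above every `S`-ordinal there is an
`S`-ordinal `ζ` with `M ⊨ σ(ζ,m)`, then below every `M`-ordinal outside `S` there is
an `M`-ordinal `μ` outside `S` with `M ⊨ σ(μ,m)`. -/
theorem stmt_13 {M : Type} (E : M → M → Prop) (nn : ℕ) (hM : KPP E)
    (hFnd : FndScheme E (IsPiP nn))
    (rk : M → M) (hrk : IsRankFn E rk)
    (S : Set M) (hSne : S.Nonempty)
    (hSrankinit : ∀ x ∈ S, ∀ y : M, OrdLE E (rk y) (rk x) → y ∈ S)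
    (hSproper : ∃ ν, IsOrd E ν ∧ ν ∉ S)
    (hStopless : ∀ ν, IsOrd E ν → ν ∉ S → ∃ μ, IsOrd E μ ∧ μ ∉ S ∧ E μ ν)
    (m : M) (σ : Fml 2) (hσ : IsSigmaP nn 2 σ)
    (hyp : ∀ ξ, IsOrd E ξ → ξ ∈ S →
        ∃ ζ, IsOrd E ζ ∧ ζ ∈ S ∧ E ξ ζ ∧ Realize E 2 σ ![ζ, m]) :
    ∀ ν, IsOrd E ν → ν ∉ S →
      ∃ μ, IsOrd E μ ∧ μ ∉ S ∧ E μ ν ∧ Realize E 2 σ ![μ, m] := by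
  obtain ⟨hext, hpair, _, _, _, hsep, _, hfnd1⟩ := hM
  have hne : Nonempty M := ⟨m⟩
  have hfd : FndScheme E IsDelta0P := fnd_delta0 hne hfnd1
  have hvec : ∀ ζ : M, (![ζ, m] : Fin 2 → M) = Fin.cons ζ (Fin.cons m Fin.elim0) := by
    intro ζ
    funext i
    fin_cases i <;> rfl
  obtain ⟨χ, hχpi, hχ⟩ := overspill_formula hext hpair hne nn σ hσ
  intro ν hν hνS
  by_contra hcon
  push_neg at hcon
  have hnotS : ∀ β, β ∉ S →
      (∀ ζ, E β ζ → E ζ ν → IsOrd E ζ →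
        ¬ Realize E 2 σ (Fin.cons ζ (Fin.cons m Fin.elim0))) := by
    intro β hβS ζ hβζ hζν hζord hσζ
    have hζS : ζ ∉ S := fun hh => hβS (hSrankinit ζ hh β (Or.inr (hrk.2.1 ζ β hβζ)))
    exact hcon ζ hζord hζS hζν (by rw [hvec ζ]; exact hσζ)
  obtain ⟨β₁, hβ₁ord, hβ₁S, hβ₁ν⟩ := hStopless ν hν hνS
  have hP₁ : Realize E 3 χ (Fin.cons β₁ (Fin.cons ν (Fin.cons m Fin.elim0))) :=
    (hχ β₁ ν m).2 ⟨hβ₁ν, hβ₁ord, hnotS β₁ hβ₁S⟩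
  obtain ⟨β₀, hβ₀, hmin⟩ := hFnd 2 χ hχpi (Fin.cons ν (Fin.cons m Fin.elim0)) ⟨β₁, hP₁⟩
  have hβ₀sem := (hχ β₀ ν m).1 hβ₀
  have hβ₀S : β₀ ∉ S := by
    intro hS
    obtain ⟨ζ, hζord, hζS, hβ₀ζ, hσζ⟩ := hyp β₀ hβ₀sem.2.1 hS
    have hζν : E ζ ν := by
      rcases ord_trichotomy hfd hext hsep hζord hν with h | h | h
      · exact absurd (h ▸ hζS) hνS
      · exact h
      · exact absurd (hSrankinit ζ hζS ν (Or.inr (hrk.2.1 ζ ν h))) hνS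
    rw [hvec ζ] at hσζ
    exact hβ₀sem.2.2 ζ hβ₀ζ hζν hζord hσζ
  obtain ⟨β₂, hβ₂ord, hβ₂S, hβ₂β₀⟩ := hStopless β₀ hβ₀sem.2.1 hβ₀S
  exact hmin β₂ hβ₂β₀ ((hχ β₂ ν m).2
    ⟨hν.1 β₀ hβ₀sem.1 β₂ hβ₂β₀, hβ₂ord, hnotS β₂ hβ₂S⟩)
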